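/- If χ₁ is σ₁-twisted positive definite and χ₂ is σ₂-twisted positive definite on the same real vector space Ξ, then the pointwise product χ₁·χ₂ is (σ₁+σ₂)-twisted positive definite (and likewise (s₁σ₁+s₂σ₂)-twisted positive definite after replacing each χ_i by its complex conjugate when s_i = −1). -/

import Mathlib

/-!
The quadratic form `twistedSum σ χ ξ` is that of the matrix
`χ(ξ_ℓ − ξ_k) exp(−(i/2) σ(ξ_k, ξ_ℓ))`, and over `ℂ` a matrix is positive semidefinite exactly
when its quadratic form takes values in `[0, ∞)`. Since the exponential turns `σ₁ + σ₂` into a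
product, the twisted matrix of `χ₁ χ₂` for `σ₁ + σ₂` is the Hadamard product of the twisted
matrices of `χ₁` and `χ₂`, which is positive semidefinite by the Schur product theorem.
Replacing `(σ, χ)` by `(−σ, χ̄)` conjugates every entry, i.e. takes the transpose of the
conjugate transpose, which preserves positive semidefiniteness.
-/

open Complex BigOperators

/-- The quadratic form associated to the σ-twisted matrix
`M_{kℓ} = χ(ξ_ℓ − ξ_k) · exp(−(i/2) σ(ξ_k, ξ_ℓ))`. -/
noncomputable def twistedSum {Ξ : Type*} [AddCommGroup Ξ] (σ : Ξ → Ξ → ℝ) (χ : Ξ → ℂ)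
    {N : ℕ} (ξ : Fin N → Ξ) (c : Fin N → ℂ) : ℂ :=
  ∑ k, ∑ l, (starRingEnd ℂ) (c k) * c l * χ (ξ l - ξ k) *
    Complex.exp (-(Complex.I / 2) * ((σ (ξ k) (ξ l) : ℝ) : ℂ))

/-- `χ` is σ-twisted positive definite: every matrix
`M_{kℓ} = χ(ξ_ℓ − ξ_k) exp(−(i/2)σ(ξ_k,ξ_ℓ))` is positive semidefinite, expressed
via nonnegativity of the associated quadratic form. -/
def IsTwistedPosDef {Ξ : Type*} [AddCommGroup Ξ] (σ : Ξ → Ξ → ℝ) (χ : Ξ → ℂ) : Prop :=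
  ∀ (N : ℕ) (ξ : Fin N → Ξ) (c : Fin N → ℂ),
    0 ≤ (twistedSum σ χ ξ c).re ∧ (twistedSum σ χ ξ c).im = 0

open Matrix
open scoped ComplexOrder

theorem Matrix.posSemidef_iff_forall_dotProduct_mulVec_nonneg {n : Type*} [Fintype n]
    [DecidableEq n] (A : Matrix n n ℂ) :
    A.PosSemidef ↔ ∀ x : n → ℂ, 0 ≤ star x ⬝ᵥ A *ᵥ x := by
  rw [← Matrix.isPositive_toEuclideanLin_iff, LinearMap.isPositive_iff_complex]
  refine (EuclideanSpace.equiv n ℂ).forall_congr fun x => ?_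
  change _ ↔ 0 ≤ star x.ofLp ⬝ᵥ A *ᵥ x.ofLp
  have hinner : inner ℂ (A.toEuclideanLin x) x = star (star x.ofLp ⬝ᵥ A *ᵥ x.ofLp) := by
    rw [star_dotProduct, star_star, dotProduct_comm]
    rfl
  rw [hinner, ← star_nonneg_iff (x := star x.ofLp ⬝ᵥ A *ᵥ x.ofLp)]
  generalize star (star x.ofLp ⬝ᵥ A *ᵥ x.ofLp) = z
  rw [Complex.nonneg_iff, Complex.ext_iff]
  simpa using and_comm

section TwistedMatrix

variable {Ξ : Type*} [AddCommGroup Ξ]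

noncomputable def twistedMatrix (σ : Ξ → Ξ → ℝ) (χ : Ξ → ℂ) {N : ℕ} (ξ : Fin N → Ξ) :
    Matrix (Fin N) (Fin N) ℂ :=
  Matrix.of fun k l => χ (ξ l - ξ k) * Complex.exp (-(Complex.I / 2) * (σ (ξ k) (ξ l) : ℂ))

theorem twistedSum_eq_star_dotProduct_mulVec (σ : Ξ → Ξ → ℝ) (χ : Ξ → ℂ) {N : ℕ}
    (ξ : Fin N → Ξ) (c : Fin N → ℂ) :
    twistedSum σ χ ξ c = star c ⬝ᵥ twistedMatrix σ χ ξ *ᵥ c := by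
  simp only [twistedSum, twistedMatrix, dotProduct, mulVec, Pi.star_apply, of_apply,
    Finset.mul_sum, starRingEnd_apply]
  exact Finset.sum_congr rfl fun k _ => Finset.sum_congr rfl fun l _ => by ring

theorem isTwistedPosDef_iff_posSemidef (σ : Ξ → Ξ → ℝ) (χ : Ξ → ℂ) :
    IsTwistedPosDef σ χ ↔ ∀ (N : ℕ) (ξ : Fin N → Ξ), (twistedMatrix σ χ ξ).PosSemidef := by
  simp only [IsTwistedPosDef, posSemidef_iff_forall_dotProduct_mulVec_nonneg,
    ← twistedSum_eq_star_dotProduct_mulVec, Complex.nonneg_iff, @eq_comm ℝ 0]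

theorem twistedMatrix_neg_conj (σ : Ξ → Ξ → ℝ) (χ : Ξ → ℂ) {N : ℕ} (ξ : Fin N → Ξ) :
    twistedMatrix (fun a b => -σ a b) (fun v => starRingEnd ℂ (χ v)) ξ =
      (twistedMatrix σ χ ξ)ᴴᵀ := by
  ext k l
  simp only [twistedMatrix, of_apply, transpose_apply, conjTranspose_apply, ← starRingEnd_apply,
    map_mul, ← Complex.exp_conj, map_neg, map_div₀, Complex.conj_I, Complex.conj_ofReal,
    Complex.ofReal_neg, map_ofNat]
  ring_nf

theorem twistedMatrix_add_mul (σa σb : Ξ → Ξ → ℝ) (χa χb : Ξ → ℂ) {N : ℕ} (ξ : Fin N → Ξ) :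
    twistedMatrix (fun a b => σa a b + σb a b) (fun v => χa v * χb v) ξ =
      twistedMatrix σa χa ξ ⊙ twistedMatrix σb χb ξ := by
  ext k l
  simp only [twistedMatrix, of_apply, hadamard_apply, Complex.ofReal_add, mul_add,
    Complex.exp_add]
  ring

theorem IsTwistedPosDef.neg_conj {σ : Ξ → Ξ → ℝ} {χ : Ξ → ℂ} (h : IsTwistedPosDef σ χ) :
    IsTwistedPosDef (fun a b => -σ a b) (fun v => starRingEnd ℂ (χ v)) := by
  rw [isTwistedPosDef_iff_posSemidef] at h ⊢
  intro N ξ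
  rw [twistedMatrix_neg_conj]
  exact (h N ξ).conjTranspose.transpose

theorem IsTwistedPosDef.add_mul {σa σb : Ξ → Ξ → ℝ} {χa χb : Ξ → ℂ}
    (ha : IsTwistedPosDef σa χa) (hb : IsTwistedPosDef σb χb) :
    IsTwistedPosDef (fun a b => σa a b + σb a b) (fun v => χa v * χb v) := by
  rw [isTwistedPosDef_iff_posSemidef] at ha hb ⊢
  intro N ξ
  rw [twistedMatrix_add_mul]
  exact (ha N ξ).hadamard (hb N ξ)

end TwistedMatrix

theorem twisted_posdef_product_signs_general {Ξ : Type*} [AddCommGroup Ξ] [Module ℝ Ξ]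
    (σ₁ σ₂ : Ξ →ₗ[ℝ] Ξ →ₗ[ℝ] ℝ)
    (χ₁ χ₂ : Ξ → ℂ)
    (hχ₁ : IsTwistedPosDef (fun ξ η => σ₁ ξ η) χ₁)
    (hχ₂ : IsTwistedPosDef (fun ξ η => σ₂ ξ η) χ₂) :
    IsTwistedPosDef (fun ξ η => σ₁ ξ η + σ₂ ξ η) (fun ξ => χ₁ ξ * χ₂ ξ) ∧
    IsTwistedPosDef (fun ξ η => - σ₁ ξ η + σ₂ ξ η)
      (fun ξ => (starRingEnd ℂ) (χ₁ ξ) * χ₂ ξ) ∧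
    IsTwistedPosDef (fun ξ η => σ₁ ξ η - σ₂ ξ η)
      (fun ξ => χ₁ ξ * (starRingEnd ℂ) (χ₂ ξ)) ∧
    IsTwistedPosDef (fun ξ η => - σ₁ ξ η - σ₂ ξ η)
      (fun ξ => (starRingEnd ℂ) (χ₁ ξ) * (starRingEnd ℂ) (χ₂ ξ)) := by
  refine ⟨hχ₁.add_mul hχ₂, hχ₁.neg_conj.add_mul hχ₂, ?_, ?_⟩
  · simpa only [← sub_eq_add_neg] using hχ₁.add_mul hχ₂.neg_conj
  · simpa only [← sub_eq_add_neg] using hχ₁.neg_conj.add_mul hχ₂.neg_conj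

/-- The pointwise product of a σ₁- and a σ₂-twisted positive definite function
on the same space is (σ₁+σ₂)-twisted positive definite, and likewise for any signs
s₁, s₂ ∈ {±1} after replacing χᵢ by its complex conjugate when sᵢ = −1. -/
theorem twisted_posdef_product_signs {Ξ : Type*} [AddCommGroup Ξ] [Module ℝ Ξ]
    (σ₁ σ₂ : Ξ →ₗ[ℝ] Ξ →ₗ[ℝ] ℝ)
    (h₁ : ∀ ξ η : Ξ, σ₁ ξ η = - σ₁ η ξ) (h₂ : ∀ ξ η : Ξ, σ₂ ξ η = - σ₂ η ξ)
    (χ₁ χ₂ : Ξ → ℂ)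
    (hχ₁ : IsTwistedPosDef (fun ξ η => σ₁ ξ η) χ₁)
    (hχ₂ : IsTwistedPosDef (fun ξ η => σ₂ ξ η) χ₂) :
    IsTwistedPosDef (fun ξ η => σ₁ ξ η + σ₂ ξ η) (fun ξ => χ₁ ξ * χ₂ ξ) ∧
    IsTwistedPosDef (fun ξ η => - σ₁ ξ η + σ₂ ξ η)
      (fun ξ => (starRingEnd ℂ) (χ₁ ξ) * χ₂ ξ) ∧
    IsTwistedPosDef (fun ξ η => σ₁ ξ η - σ₂ ξ η)
      (fun ξ => χ₁ ξ * (starRingEnd ℂ) (χ₂ ξ)) ∧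
    IsTwistedPosDef (fun ξ η => - σ₁ ξ η - σ₂ ξ η)
      (fun ξ => (starRingEnd ℂ) (χ₁ ξ) * (starRingEnd ℂ) (χ₂ ξ)) :=
  twisted_posdef_product_signs_general σ₁ σ₂ χ₁ χ₂ hχ₁ hχ₂
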